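/- arXiv:1207.6099 — 9 statements merged into one kernel-verified Lean document; each statement's English description precedes it below -/
import Mathlib

section
/- Let L/k be a field extension, σ a field automorphism of L of order n fixing k, and r ∈ L. If 1 + r + r·σ(r) + r·σ(r)·σ²(r) + ... + r·σ(r)···σ^{n-2}(r) = 0, then r·σ(r)·σ²(r)···σ^{n-1}(r) = 1. -/
/-! Write `P j = r f(r) ⋯ f^{j-1}(r)`, so that `P (j + 1) = r f(P j)`. Adding `P n` to the
vanishing sum `S = P 0 + ⋯ + P (n - 1)` gives
`P n = P 0 + ⋯ + P n = 1 + r f(S) = 1`. -/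

open Finset

namespace RingHom

variable {A : Type*} [CommSemiring A] (f : A →+* A) (r : A)

theorem prod_range_succ_iterate (j : ℕ) :
    ∏ i ∈ Finset.range (j + 1), f^[i] r = r * f (∏ i ∈ Finset.range j, f^[i] r) := by
  rw [prod_range_succ', map_prod, mul_comm]
  simp only [Function.iterate_succ_apply', Function.iterate_zero_apply]

theorem sum_range_succ_prod_iterate (n : ℕ) :
    ∑ j ∈ Finset.range (n + 1), ∏ i ∈ Finset.range j, f^[i] r
      = 1 + r * f (∑ j ∈ Finset.range n, ∏ i ∈ Finset.range j, f^[i] r) := by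
  simp only [sum_range_succ', prod_range_succ_iterate, map_sum, mul_sum, prod_range_zero,
    add_comm]

theorem prod_range_iterate_eq_one_of_sum_eq_zero {n : ℕ}
    (hM : ∑ j ∈ Finset.range n, ∏ i ∈ Finset.range j, f^[i] r = 0) :
    ∏ i ∈ Finset.range n, f^[i] r = 1 := by
  have h := sum_range_succ_prod_iterate f r n
  rwa [sum_range_succ, hM, zero_add, map_zero, mul_zero, add_zero] at h

end RingHom

theorem murphy_norm_one_general {k L : Type*} [Field k] [Field L] [Algebra k L]
    (n : ℕ) (σ : L ≃ₐ[k] L) (r : L)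
    (hM : ∑ j ∈ Finset.range n, ∏ i ∈ Finset.range j, (σ ^ i) r = 0) :
    ∏ i ∈ Finset.range n, (σ ^ i) r = 1 := by
  simp only [AlgEquiv.coe_pow] at hM ⊢
  exact (σ : L →+* L).prod_range_iterate_eq_one_of_sum_eq_zero r hM

/-- If `σ` is an automorphism of `L` of order `n` fixing `k`, and
`1 + r + rσ(r) + ⋯ + rσ(r)⋯σ^{n-2}(r) = 0` (the Murphy condition), then
`r·σ(r)⋯σ^{n-1}(r) = 1`. -/
theorem murphy_norm_one {k L : Type*} [Field k] [Field L] [Algebra k L]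
    (n : ℕ) (hn : 0 < n) (σ : L ≃ₐ[k] L) (hord : orderOf σ = n) (r : L)
    (hM : ∑ j ∈ Finset.range n, ∏ i ∈ Finset.range j, (σ ^ i) r = 0) :
    ∏ i ∈ Finset.range n, (σ ^ i) r = 1 :=
  murphy_norm_one_general n σ r hM
end

section
/- Let k be a field, t ∈ k, P(x) = x⁴ - t·x³ - 6x² + t·x + 1, and σ(x) = (-x-1)/(x-1). If r is a root of P with r ∉ {1, -1, 0}, then σ(r), σ²(r) = -1/r, and σ³(r) = (r-1)/(r+1) are also roots of P, and 1 + r + r·σ(r) + r·σ(r)·σ²(r) = 0. -/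
/-!
The substitution `x ↦ n / d` turns `P` into its binary form `d⁴ P(n/d)`, and for the three maps
`σ`, `σ²`, `σ³` that form is a constant multiple of `P` itself:
`(x - 1)⁴ P(σ x) = -4 P(x)`, `x⁴ P(-1/x) = P(x)` and `(x + 1)⁴ P((x - 1)/(x + 1)) = -4 P(x)`.
Hence the cyclic group generated by `σ` permutes the roots of `P` away from the poles `1, -1, 0`.
-/

section SimplestQuartic

variable {K : Type*} [Field K]

def simplestQuartic (t x : K) : K :=
  x ^ 4 - t * x ^ 3 - 6 * x ^ 2 + t * x + 1

theorem pow_four_mul_simplestQuartic_div (t n : K) {d : K} (hd : d ≠ 0) :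
    d ^ 4 * simplestQuartic t (n / d) =
      n ^ 4 - t * n ^ 3 * d - 6 * n ^ 2 * d ^ 2 + t * n * d ^ 3 + d ^ 4 := by
  unfold simplestQuartic
  field_simp

theorem simplestQuartic_neg_sub_one_div_sub_one (t : K) {x : K} (hx : x ≠ 1) :
    (x - 1) ^ 4 * simplestQuartic t ((-x - 1) / (x - 1)) = -4 * simplestQuartic t x := by
  rw [pow_four_mul_simplestQuartic_div t _ (sub_ne_zero.mpr hx), simplestQuartic]
  ring

theorem simplestQuartic_neg_one_div (t : K) {x : K} (hx : x ≠ 0) :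
    x ^ 4 * simplestQuartic t (-1 / x) = simplestQuartic t x := by
  rw [pow_four_mul_simplestQuartic_div t _ hx, simplestQuartic]
  ring

theorem simplestQuartic_sub_one_div_add_one (t : K) {x : K} (hx : x ≠ -1) :
    (x + 1) ^ 4 * simplestQuartic t ((x - 1) / (x + 1)) = -4 * simplestQuartic t x := by
  have hx' : x + 1 ≠ 0 := by rwa [ne_eq, add_eq_zero_iff_eq_neg]
  rw [pow_four_mul_simplestQuartic_div t _ hx', simplestQuartic]
  ring

theorem one_add_add_mul_neg_sub_one_div_sub_one {x : K} (hx0 : x ≠ 0) (hx1 : x ≠ 1) :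
    1 + x + x * ((-x - 1) / (x - 1)) + x * ((-x - 1) / (x - 1)) * (-1 / x) = 0 := by
  have : x - 1 ≠ 0 := sub_ne_zero.mpr hx1
  field_simp
  ring

end SimplestQuartic

/-- For the simplest quartic `P(x) = x⁴ - t x³ - 6x² + t x + 1` and
`σ(x) = (-x-1)/(x-1)`: if `r` is a root of `P` with `r ∉ {1, -1, 0}`, then
`σ(r)`, `σ²(r) = -1/r`, `σ³(r) = (r-1)/(r+1)` are roots of `P`, and
`1 + r + r·σ(r) + r·σ(r)·σ²(r) = 0`. -/
theorem simplest_quartic_roots {k K : Type*} [Field k] [Field K] [Algebra k K]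
    (t : k) (r : K) (hr1 : r ≠ 1) (hrneg1 : r ≠ -1) (hr0 : r ≠ 0)
    (hr : r ^ 4 - algebraMap k K t * r ^ 3 - 6 * r ^ 2 + algebraMap k K t * r + 1 = 0) :
    ((-r - 1) / (r - 1)) ^ 4 - algebraMap k K t * ((-r - 1) / (r - 1)) ^ 3
        - 6 * ((-r - 1) / (r - 1)) ^ 2 + algebraMap k K t * ((-r - 1) / (r - 1)) + 1 = 0 ∧
    (-1 / r) ^ 4 - algebraMap k K t * (-1 / r) ^ 3
        - 6 * (-1 / r) ^ 2 + algebraMap k K t * (-1 / r) + 1 = 0 ∧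
    ((r - 1) / (r + 1)) ^ 4 - algebraMap k K t * ((r - 1) / (r + 1)) ^ 3
        - 6 * ((r - 1) / (r + 1)) ^ 2 + algebraMap k K t * ((r - 1) / (r + 1)) + 1 = 0 ∧
    1 + r + r * ((-r - 1) / (r - 1)) + r * ((-r - 1) / (r - 1)) * (-1 / r) = 0 := by
  set T := algebraMap k K t
  change simplestQuartic T r = 0 at hr
  change simplestQuartic T _ = 0 ∧ simplestQuartic T _ = 0 ∧ simplestQuartic T _ = 0 ∧ _
  have hσ := simplestQuartic_neg_sub_one_div_sub_one T hr1
  have hσ2 := simplestQuartic_neg_one_div T hr0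
  have hσ3 := simplestQuartic_sub_one_div_add_one T hrneg1
  refine ⟨?_, ?_, ?_, one_add_add_mul_neg_sub_one_div_sub_one hr0 hr1⟩
  · simpa [hr, sub_eq_zero, hr1] using hσ
  · simpa [hr, hr0] using hσ2
  · simpa [hr, add_eq_zero_iff_eq_neg, hrneg1] using hσ3
end

section
/- Let L/k be a finite Galois extension with Galois group G, σ ∈ G of order n, and r ∈ L satisfying the Murphy condition (M) for σ. If γ ∈ G commutes with σ, then γ(r) also satisfies (M) for σ. -/
open Finset

/-- The left-hand side `1 + r + r σ(r) + ⋯ + r σ(r) ⋯ σ^{n-2}(r)` of the Murphy condition. -/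
def murphySum {R A : Type*} [CommSemiring R] [CommSemiring A] [Algebra R A]
    (σ : A ≃ₐ[R] A) (n : ℕ) (r : A) : A :=
  ∑ j ∈ range n, ∏ i ∈ range j, (σ ^ i) r

section

variable {R A : Type*} [CommSemiring R] [CommSemiring A] [Algebra R A]

theorem AlgEquiv.pow_apply_apply_of_commute {σ γ : A ≃ₐ[R] A} (h : Commute γ σ) (i : ℕ)
    (x : A) : (σ ^ i) (γ x) = γ ((σ ^ i) x) :=
  DFunLike.congr_fun ((h.pow_right i).eq.symm) x

theorem map_murphySum_of_commute {σ γ : A ≃ₐ[R] A} (h : Commute γ σ) (n : ℕ) (r : A) :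
    γ (murphySum σ n r) = murphySum σ n (γ r) := by
  simp only [murphySum, map_sum, map_prod, AlgEquiv.pow_apply_apply_of_commute h]

end

theorem murphy_of_centralizer_general {k L : Type*} [Field k] [Field L] [Algebra k L]
    (n : ℕ) (σ γ : L ≃ₐ[k] L)
    (hcomm : Commute γ σ) (r : L)
    (hM : ∑ j ∈ Finset.range n, ∏ i ∈ Finset.range j, (σ ^ i) r = 0) :
    ∑ j ∈ Finset.range n, ∏ i ∈ Finset.range j, (σ ^ i) (γ r) = 0 := by
  change murphySum σ n (γ r) = 0
  rw [← map_murphySum_of_commute hcomm, murphySum, hM, map_zero]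

/-- If `L/k` is finite Galois, `σ` has order `n`, `r` satisfies the
Murphy condition for `σ`, and `γ` commutes with `σ`, then `γ(r)` satisfies the
Murphy condition for `σ`. -/
theorem murphy_of_centralizer {k L : Type*} [Field k] [Field L] [Algebra k L]
    [FiniteDimensional k L] [IsGalois k L]
    (n : ℕ) (hn : 0 < n) (σ γ : L ≃ₐ[k] L) (hord : orderOf σ = n)
    (hcomm : Commute γ σ) (r : L)
    (hM : ∑ j ∈ Finset.range n, ∏ i ∈ Finset.range j, (σ ^ i) r = 0) :
    ∑ j ∈ Finset.range n, ∏ i ∈ Finset.range j, (σ ^ i) (γ r) = 0 :=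
  murphy_of_centralizer_general n σ γ hcomm r hM
end

section
/- Let L/k be a cyclic extension of degree n > 2 with Galois group ⟨σ⟩, with k an infinite field. Then there exists r ∈ L with L = k(r) and 1 + r + rσ(r) + ... + rσ(r)···σ^{n-2}(r) = 0. -/
/-!
Pick `z ≠ 0` with `Tr z = 0` such that no `τ ≠ 1` maps `z` to a `k`-multiple of itself, and put
`r = σ z / z`. The products `r σ(r) ⋯ σ^(j-1)(r)` telescope to `σ^j z / z`, so the Murphy sum
is `Tr z / z = 0`. If `τ = σ^m ≠ 1` fixed `r`, then `τ z / z` would be fixed by `σ`, hence lie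
in `k`; so `r` is primitive. Such a `z` exists because, for `τ ≠ 1`, Dedekind's independence
of characters (with `[L : k] > 2`) shows the hyperplane `ker Tr` lies in no eigenspace of `τ`,
and over an infinite field `ker Tr` is not a union of finitely many proper subspaces.
-/

open Finset Module Module.End

theorem Subspace.exists_mem_forall_notMem_of_not_le {K E ι : Type*} [DivisionRing K]
    [Infinite K] [AddCommGroup E] [Module K E] [Finite ι] {V : Subspace K E}
    {p : ι → Subspace K E}
    (h : ∀ i, ¬ V ≤ p i) : ∃ v ∈ V, ∀ i, v ∉ p i := by
  by_contra! hcov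
  obtain ⟨i, hi⟩ := Subspace.exists_eq_top_of_iUnion_eq_univ
    (p := fun i => (p i).comap V.subtype)
    (Set.eq_univ_of_forall fun v => Set.mem_iUnion.2 (hcov v v.2))
  exact h i (Submodule.comap_subtype_eq_top.1 hi)

theorem sum_range_orderOf_pow_eq_sum_univ {G M : Type*} [Group G] [Fintype G] [AddCommMonoid M]
    {a : G} (ha : ∀ g, g ∈ Subgroup.zpowers a) (f : G → M) :
    ∑ i ∈ range (orderOf a), f (a ^ i) = ∑ g, f g := by
  classical
  rw [← IsCyclic.image_range_orderOf ha, sum_image fun i hi j hj hij =>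
    pow_injOn_Iio_orderOf (by simpa using hi) (by simpa using hj) hij]

section Galois

variable {k L : Type*} [Field k] [Field L] [Algebra k L]

theorem prod_range_pow_apply_div_self (σ : L ≃ₐ[k] L) {z : L} (hz : z ≠ 0) (j : ℕ) :
    ∏ i ∈ range j, (σ ^ i) (σ z / z) = (σ ^ j) z / z := by
  induction j with
  | zero => simp [hz]
  | succ j ih =>
    have hσz : (σ ^ j) z ≠ 0 := (map_ne_zero _).2 hz
    rw [prod_range_succ, ih, map_div₀, ← AlgEquiv.mul_apply, ← pow_succ]
    field_simp

variable [FiniteDimensional k L] [IsGalois k L]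

theorem adjoin_simple_eq_top_of_forall_apply_eq_self {x : L}
    (h : ∀ τ : L ≃ₐ[k] L, τ x = x → τ = 1) : IntermediateField.adjoin k {x} = ⊤ := by
  rw [← IsGalois.fixedField_fixingSubgroup (IntermediateField.adjoin k {x}),
    ← IntermediateField.fixedField_bot]
  congr 1
  refine eq_bot_iff.2 fun τ hτ => h τ ?_
  exact (IntermediateField.mem_fixingSubgroup_iff _ τ).1 hτ x
    (IntermediateField.mem_adjoin_simple_self k x)

theorem adjoin_simple_div_eq_top {σ : L ≃ₐ[k] L} (hgen : ∀ τ, τ ∈ Subgroup.zpowers σ)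
    {z : L} (hz0 : z ≠ 0)
    (hz : ∀ τ : L ≃ₐ[k] L, τ ≠ 1 → ∀ c : k, τ z ≠ c • z) :
    IntermediateField.adjoin k {σ z / z} = ⊤ := by
  refine adjoin_simple_eq_top_of_forall_apply_eq_self fun τ hτr => ?_
  by_contra hτ
  obtain ⟨m, rfl⟩ := Subgroup.mem_zpowers_iff.1 (hgen τ)
  -- `σ` commutes with `τ = σ ^ m`, so `τ` fixing `σ z / z` means `σ` fixes `τ z / z`.
  have hcomm : σ ((σ ^ m) z) = (σ ^ m) (σ z) := by
    rw [← AlgEquiv.mul_apply, ((Commute.refl σ).zpow_right m).eq, AlgEquiv.mul_apply]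
  have hσu : σ ((σ ^ m) z / z) = (σ ^ m) z / z := by
    have h1 : (σ ^ m) z ≠ 0 := (map_ne_zero _).2 hz0
    have h2 : σ z ≠ 0 := (map_ne_zero _).2 hz0
    rw [map_div₀] at hτr
    rw [map_div₀, hcomm]
    field_simp at hτr ⊢
    linear_combination hτr
  have hu : ∀ τ : L ≃ₐ[k] L, τ ((σ ^ m) z / z) = (σ ^ m) z / z := fun τ =>
    Subgroup.zpowers_le.2 (MulAction.mem_stabilizer_iff.2 hσu) (hgen τ)
  obtain ⟨c, hc⟩ := (IsGalois.mem_range_algebraMap_iff_fixed _).2 hu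
  exact hz _ hτ c (by rw [Algebra.smul_def, hc, div_mul_cancel₀ _ hz0])

theorem ker_trace_not_le_eigenspace (hL : 2 < finrank k L) {τ : L ≃ₐ[k] L} (hτ : τ ≠ 1)
    (c : k) : ¬ LinearMap.ker (Algebra.trace k L) ≤ eigenspace τ.toLinearMap c := by
  classical
  intro hle
  obtain ⟨z₀, hz₀⟩ := Algebra.trace_surjective k L 1
  set w := τ z₀ - c • z₀
  -- `τ - c` vanishes on the hyperplane `ker Tr`, so it is determined by its value `w` at `z₀`.
  have hτx : ∀ x, τ x = c • x + Algebra.trace k L x • w := by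
    intro x
    have hx : x - Algebra.trace k L x • z₀ ∈ LinearMap.ker (Algebra.trace k L) := by
      simp [hz₀]
    have := mem_eigenspace_iff.1 (hle hx)
    simp only [AlgEquiv.toLinearMap_apply, map_sub, map_smul] at this
    linear_combination (norm := module) this
  -- The relation `τ - c • 1 - w • ∑ g, g = 0` among the characters: the coefficient `-w` of
  -- some `g ∉ {1, τ}` must vanish, and then so must the coefficient `1` of `τ`.
  let a : (L ≃ₐ[k] L) → L := fun g =>
    (if g = τ then 1 else 0) - (if g = 1 then algebraMap k L c else 0) - w
  have ha : ∑ g, a g • (g : L → L) = 0 := by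
    funext x
    have hsum : ∑ g, a g * g x = τ x - c • x - Algebra.trace k L x • w := by
      simp only [a, sub_mul, sum_sub_distrib, ite_mul, one_mul, zero_mul, sum_ite_eq',
        mem_univ, if_true, ← mul_sum, ← trace_eq_sum_automorphisms, AlgEquiv.one_apply,
        Algebra.smul_def]
      ring
    simpa [hτx x, Finset.sum_apply, smul_eq_mul] using hsum
  have hDedekind : LinearIndependent L (fun g : L ≃ₐ[k] L => (g : L → L)) :=
    (linearIndependent_monoidHom L L).comp (ι' := L ≃ₐ[k] L) (fun g => g) fun _ _ h => by
      ext; exact DFunLike.ext_iff.1 h _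
  have ha0 := Fintype.linearIndependent_iff.1 hDedekind a ha
  obtain ⟨g, -, hg⟩ : ∃ g ∈ (univ : Finset (L ≃ₐ[k] L)), g ∉ ({1, τ} : Finset _) :=
    exists_mem_notMem_of_card_lt_card <| card_le_two.trans_lt <| by
      rwa [card_univ, ← Nat.card_eq_fintype_card, IsGalois.card_aut_eq_finrank]
  simp only [mem_insert, mem_singleton, not_or] at hg
  have hw : w = 0 := by simpa [a, hg.1, hg.2] using ha0 g
  simpa [a, hτ, hw] using ha0 τ

theorem exists_trace_eq_zero_forall_ne_smul [Infinite k] (hL : 2 < finrank k L) :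
    ∃ z : L, Algebra.trace k L z = 0 ∧ z ≠ 0 ∧
      ∀ τ : L ≃ₐ[k] L, τ ≠ 1 → ∀ c : k, τ z ≠ c • z := by
  -- Instance search does not find the fibrewise finiteness of the `Sigma` index type by itself.
  have (τ : {τ : L ≃ₐ[k] L // τ ≠ 1}) : Finite (Eigenvalues τ.1.toLinearMap) :=
    inferInstance
  obtain ⟨z, hz, hp⟩ := Subspace.exists_mem_forall_notMem_of_not_le
    (p := fun i : Σ τ : {τ : L ≃ₐ[k] L // τ ≠ 1}, Eigenvalues τ.1.toLinearMap =>
      eigenspace i.1.1.toLinearMap i.2)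
    fun i => ker_trace_not_le_eigenspace hL i.1.2 _
  have hz0 : z ≠ 0 := by
    have : Nontrivial (L ≃ₐ[k] L) := by
      rw [← Finite.one_lt_card_iff_nontrivial, IsGalois.card_aut_eq_finrank]
      omega
    obtain ⟨τ, hτ⟩ := exists_ne (1 : L ≃ₐ[k] L)
    have h1 : HasEigenvalue τ.toLinearMap 1 := hasEigenvalue_of_hasEigenvector
      ⟨mem_eigenspace_iff.2 (by simp), one_ne_zero⟩
    rintro rfl
    exact hp ⟨⟨τ, hτ⟩, ⟨1, h1⟩⟩ (zero_mem _)
  refine ⟨z, hz, hz0, fun τ hτ c h => ?_⟩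
  have hc : HasEigenvalue τ.toLinearMap c :=
    hasEigenvalue_of_hasEigenvector ⟨mem_eigenspace_iff.2 h, hz0⟩
  exact hp ⟨⟨τ, hτ⟩, ⟨c, hc⟩⟩ (mem_eigenspace_iff.2 h)

end Galois

/-- If `L/k` is cyclic of degree `n > 2` with Galois group generated by
`σ`, and `k` is infinite, then there is a primitive element `r` of `L/k` satisfying
the Murphy condition. -/
theorem exists_primitive_murphy {k L : Type*} [Field k] [Infinite k] [Field L]
    [Algebra k L] [FiniteDimensional k L] [IsGalois k L]
    (σ : L ≃ₐ[k] L) (hgen : ∀ τ : L ≃ₐ[k] L, τ ∈ Subgroup.zpowers σ)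
    (n : ℕ) (hn : n = Module.finrank k L) (hn2 : 2 < n) :
    ∃ r : L, IntermediateField.adjoin k {r} = ⊤ ∧
      ∑ j ∈ Finset.range n, ∏ i ∈ Finset.range j, (σ ^ i) r = 0 := by
  obtain ⟨z, hTz, hz0, hz⟩ := exists_trace_eq_zero_forall_ne_smul (hn ▸ hn2)
  have hord : orderOf σ = n := by
    rw [orderOf_eq_card_of_forall_mem_zpowers hgen, IsGalois.card_aut_eq_finrank, hn]
  refine ⟨σ z / z, adjoin_simple_div_eq_top hgen hz0 hz, ?_⟩
  calc ∑ j ∈ range n, ∏ i ∈ range j, (σ ^ i) (σ z / z)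
      = (∑ j ∈ range (orderOf σ), (σ ^ j) z) / z := by
        simp_rw [prod_range_pow_apply_div_self σ hz0, hord, sum_div]
    _ = algebraMap k L (Algebra.trace k L z) / z := by
        rw [sum_range_orderOf_pow_eq_sum_univ hgen (· z), trace_eq_sum_automorphisms]
    _ = 0 := by rw [hTz, map_zero, zero_div]
end

section
/- Let r be a root of x³ - tx² - (t+3)x - 1 for t ∈ ℤ, and set z = 2r² - (2t+1)r - t - 4. Then z³ - (t² + 3t + 9)z + (t² + 3t + 9) = 0. -/
/-- If `r` is a root of `x³ - t x² - (t+3)x - 1` for `t ∈ ℤ` and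
`z = 2r² - (2t+1)r - t - 4`, then `z³ - (t²+3t+9)z + (t²+3t+9) = 0`. -/
theorem shanks_kernel_element {K : Type*} [Field K] (t : ℤ) (r : K)
    (hr : r ^ 3 - (t : K) * r ^ 2 - ((t : K) + 3) * r - 1 = 0) :
    (2 * r ^ 2 - (2 * (t : K) + 1) * r - (t : K) - 4) ^ 3
      - ((t : K) ^ 2 + 3 * (t : K) + 9) * (2 * r ^ 2 - (2 * (t : K) + 1) * r - (t : K) - 4)
      + ((t : K) ^ 2 + 3 * (t : K) + 9) = 0 := by
  -- The left side is a sextic in `r`; the cofactor is its quotient by the cubic,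
  -- and the remainder vanishes identically.
  linear_combination (8 * r ^ 3 - (16 * (t : K) + 12) * r ^ 2
    + (8 * (t : K) ^ 2 + 8 * (t : K) - 18) * r + 4 * (t : K) ^ 2 + 24 * (t : K) + 19) * hr
end

section
/- Let k be a field of characteristic ≠ 2, m, A ∈ k with m² - 4 not a square in k, and u a root of u² - mu + 1 = 0 in k(√(m²-4)). Let p(x) = x⁴ + (u - u⁻¹ - A)x³ + ((2-A)u - A - 4)x² + (u² - 1 - Au)x + u², and let p̄(x) be obtained from p(x) by replacing u by u⁻¹. Then (x+u)⁴ · p̄((-x-1)/(x+u)) = (m-2)·p(x) as polynomials. -/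
open Polynomial

/-!
Write `v = u⁻¹`. The relation `u² - m u + 1 = 0` says `m = u + v`, so the claim is an identity
between polynomials in `x, u, v, A` that holds modulo `u v = 1`; it is therefore valid in every
commutative ring with `u v = 1`.
-/

noncomputable def pquart {K : Type*} [Field K] (u A : K) : Polynomial K :=
  X ^ 4 + C (u - u⁻¹ - A) * X ^ 3 + C ((2 - A) * u - A - 4) * X ^ 2
    + C (u ^ 2 - 1 - A * u) * X + C (u ^ 2)

theorem quartic_conjugate_identity {R : Type*} [CommRing R] (x u v a : R) (huv : u * v = 1) :
    (-(x + 1)) ^ 4 + (v - u - a) * (-(x + 1)) ^ 3 * (x + u)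
      + ((2 - a) * v - a - 4) * (-(x + 1)) ^ 2 * (x + u) ^ 2
      + (v ^ 2 - 1 - a * v) * (-(x + 1)) * (x + u) ^ 3 + v ^ 2 * (x + u) ^ 4
      = (u + v - 2) * (x ^ 4 + (u - v - a) * x ^ 3 + ((2 - a) * u - a - 4) * x ^ 2
          + (u ^ 2 - 1 - a * u) * x + u ^ 2) := by
  grind

theorem sum_coeff_pquart_mul_pow {K : Type*} [Field K] (v A : K) (Y Z : K[X]) :
    ∑ i ∈ Finset.range 5, C ((pquart v A).coeff i) * Y ^ i * Z ^ (4 - i)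
      = Y ^ 4 + C (v - v⁻¹ - A) * Y ^ 3 * Z + C ((2 - A) * v - A - 4) * Y ^ 2 * Z ^ 2
        + C (v ^ 2 - 1 - A * v) * Y * Z ^ 3 + C (v ^ 2) * Z ^ 4 := by
  simp only [pquart, Finset.sum_range_succ, Finset.sum_range_zero, coeff_add, coeff_C_mul,
    coeff_X_pow, coeff_X, coeff_C]
  norm_num
  ring

theorem pquart_conj_homogenize {K : Type*} [Field K] {u : K} (hu : u ≠ 0) (A : K) :
    ∑ i ∈ Finset.range 5, C ((pquart u⁻¹ A).coeff i) * (-(X + 1)) ^ i * (X + C u) ^ (4 - i)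
      = C (u + u⁻¹ - 2) * pquart u A := by
  rw [sum_coeff_pquart_mul_pow, inv_inv, pquart]
  have huv : C u * C u⁻¹ = (1 : K[X]) := by rw [← C_mul, mul_inv_cancel₀ hu, C_1]
  simp only [map_sub, map_add, map_mul, map_pow, map_ofNat, map_one]
  exact quartic_conjugate_identity X (C u) (C u⁻¹) (C A) huv

theorem opensesame_general {k K : Type*} [Field k] [Field K] [Algebra k K]
    (m A : k)
    (u : K) (hu : u ^ 2 - algebraMap k K m * u + 1 = 0) :
    ∑ i ∈ Finset.range 5,
        C ((pquart u⁻¹ (algebraMap k K A)).coeff i) * (-(X + 1)) ^ i * (X + C u) ^ (4 - i)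
      = C (algebraMap k K (m - 2)) * pquart u (algebraMap k K A) := by
  have hu0 : u ≠ 0 := by
    rintro rfl
    simp at hu
  have hm : algebraMap k K m = u + u⁻¹ := by
    field_simp
    linear_combination -hu
  rw [map_sub, hm, map_ofNat]
  exact pquart_conj_homogenize hu0 _

/-- with `u² - mu + 1 = 0` and `p̄` the conjugate quartic (replace `u` by
`u⁻¹`), the polynomial identity `(x+u)⁴·p̄((-x-1)/(x+u)) = (m-2)·p(x)` holds, written
in cleared-denominator form. -/
theorem opensesame {k K : Type*} [Field k] [Field K] [Algebra k K]
    (h2 : (2 : k) ≠ 0) (m A : k) (hm : ∀ x : k, x ^ 2 ≠ m ^ 2 - 4)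
    (u : K) (hu : u ^ 2 - algebraMap k K m * u + 1 = 0) :
    ∑ i ∈ Finset.range 5,
        C ((pquart u⁻¹ (algebraMap k K A)).coeff i) * (-(X + 1)) ^ i * (X + C u) ^ (4 - i)
      = C (algebraMap k K (m - 2)) * pquart u (algebraMap k K A) :=
  opensesame_general m A u hu
end

section
/- Let k be a field of characteristic ≠ 2, m, A ∈ k, u with u² - mu + 1 = 0, and suppose F(Y) = Y² + (-A + u - u⁻¹)Y - A - 4 - Au factors as (Y-α)(Y-β). Set Q₁ = 1 + α + u and Q₂ = 1 + β + u. Then α² - 4u = Q₁·(Q₁ + Q₂·u - 2(u+1)). -/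
theorem disc_factor_identity_general {K : Type*} [Field K]
    (m A u α β : K) (hu : u ^ 2 - m * u + 1 = 0)
    (hsum : α + β = A - u + u⁻¹) (hprod : α * β = -A - 4 - A * u) :
    α ^ 2 - 4 * u
      = (1 + α + u) * ((1 + α + u) + (1 + β + u) * u - 2 * (u + 1)) := by
  have hu0 : u ≠ 0 :=
    left_ne_zero_of_mul_eq_one (b := m - u) (by linear_combination -hu : u * (m - u) = 1)
  have hsum_cleared : u * (α + β) = A * u - u ^ 2 + 1 := by
    rw [hsum, mul_add, mul_sub, mul_inv_cancel₀ hu0]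
    ring
  linear_combination (-(1 + u)) * hsum_cleared - u * hprod

/-- if `u² - mu + 1 = 0` and `F(Y) = Y² + (-A + u - u⁻¹)Y - A - 4 - Au`
factors as `(Y-α)(Y-β)`, then with `Q₁ = 1 + α + u` and `Q₂ = 1 + β + u` one has
`α² - 4u = Q₁·(Q₁ + Q₂·u - 2(u+1))`. -/
theorem disc_factor_identity {K : Type*} [Field K] (h2 : (2 : K) ≠ 0)
    (m A u α β : K) (hu : u ^ 2 - m * u + 1 = 0)
    (hsum : α + β = A - u + u⁻¹) (hprod : α * β = -A - 4 - A * u) :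
    α ^ 2 - 4 * u
      = (1 + α + u) * ((1 + α + u) + (1 + β + u) * u - 2 * (u + 1)) :=
  disc_factor_identity_general m A u α β hu hsum hprod
end

section
/- Let k be a field of characteristic ≠ 2, m, A ∈ k with m² - 4 not a square in k. Let s, w be elements in an extension with s² = m² - 4, w² = (m+2+A)² - 4(m-2), and set u = (m+s)/2, q₁(x) = x² + ((-A+s-w)/2)x + (m+s)/2 and q₃(x) = x² + ((-A-s+w)/2)x + (m-s)/2. Then (x+u)²·q₃((-x-1)/(x+u)) = q₃(-1)·q₁(x) as polynomials in k(s,w)[x]. -/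
open Polynomial

/-- The left side is `(X + u)² q((-X - 1)/(X + u))` for `q = X² + aX + c`, denominators cleared;
its leading coefficient is `q(-1) = 1 - a + c`. -/
theorem quadratic_moebius_clear_eq {R : Type*} [CommRing R] {a b c u : R} (hcu : c * u = 1)
    (hb : (1 - a + c) * b = 4 - a * (1 + u)) :
    (X + 1) ^ 2 - C a * (X + 1) * (X + C u) + C c * (X + C u) ^ 2
      = C (1 - a + c) * (X ^ 2 + C b * X + C u) := by
  have hcu' : C c * C u = 1 := by rw [← C_mul, hcu, C_1]
  have hb' : (1 - C a + C c) * C b = 4 - C a * (1 + C u) := by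
    simpa only [C_mul, C_sub, C_add, C_1, C_ofNat] using congrArg C hb
  simp only [C_sub, C_add, C_1]
  linear_combination (C u - 1 + 2 * X) * hcu' - X * hb'

theorem q3_q1_identity_general {k K : Type*} [Field k] [Field K] [Algebra k K]
    (h2 : (2 : k) ≠ 0) (m A : k)
    (s w : K) (hs : s ^ 2 = algebraMap k K (m ^ 2 - 4))
    (hw : w ^ 2 = algebraMap k K ((m + 2 + A) ^ 2 - 4 * (m - 2))) :
    let M := algebraMap k K m
    let A' := algebraMap k K A
    let u := (M + s) / 2
    let q₁ : Polynomial K := X ^ 2 + C ((-A' + s - w) / 2) * X + C ((M + s) / 2)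
    let q₃ : Polynomial K := X ^ 2 + C ((-A' - s + w) / 2) * X + C ((M - s) / 2)
    (X + 1) ^ 2 - C ((-A' - s + w) / 2) * (X + 1) * (X + C u)
        + C ((M - s) / 2) * (X + C u) ^ 2
      = C (q₃.eval (-1)) * q₁ := by
  intro M A' u q₁ q₃
  have h2K : (2 : K) ≠ 0 := by
    rw [← map_ofNat (algebraMap k K) 2]
    exact (_root_.map_ne_zero _).mpr h2
  simp only [map_sub, map_add, map_pow, map_mul, map_ofNat] at hs hw
  change s ^ 2 = M ^ 2 - 4 at hs
  change w ^ 2 = (M + 2 + A') ^ 2 - 4 * (M - 2) at hw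
  have hq₃ : q₃.eval (-1) = 1 - (-A' - s + w) / 2 + (M - s) / 2 := by
    simp only [q₃, eval_add, eval_mul, eval_pow, eval_C, eval_X]
    ring
  rw [hq₃]
  -- `(M - s)/2 · (M + s)/2 = (M² - s²)/4 = 1`; only the linear coefficient involves `w`.
  refine quadratic_moebius_clear_eq ?_ ?_ <;> simp only [u]
  · field_simp
    linear_combination -hs
  · field_simp
    linear_combination -hs + hw

/-- with `s² = m² - 4`, `w² = (m+2+A)² - 4(m-2)`, `u = (m+s)/2`,
`q₁(x) = x² + ((-A+s-w)/2)x + (m+s)/2` and `q₃(x) = x² + ((-A-s+w)/2)x + (m-s)/2`,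
the polynomial identity `(x+u)²·q₃((-x-1)/(x+u)) = q₃(-1)·q₁(x)` holds (stated with
denominators cleared). -/
theorem q3_q1_identity {k K : Type*} [Field k] [Field K] [Algebra k K]
    (h2 : (2 : k) ≠ 0) (m A : k) (hm : ∀ x : k, x ^ 2 ≠ m ^ 2 - 4)
    (s w : K) (hs : s ^ 2 = algebraMap k K (m ^ 2 - 4))
    (hw : w ^ 2 = algebraMap k K ((m + 2 + A) ^ 2 - 4 * (m - 2))) :
    let M := algebraMap k K m
    let A' := algebraMap k K A
    let u := (M + s) / 2
    let q₁ : Polynomial K := X ^ 2 + C ((-A' + s - w) / 2) * X + C ((M + s) / 2)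
    let q₃ : Polynomial K := X ^ 2 + C ((-A' - s + w) / 2) * X + C ((M - s) / 2)
    (X + 1) ^ 2 - C ((-A' - s + w) / 2) * (X + 1) * (X + C u)
        + C ((M - s) / 2) * (X + C u) ^ 2
      = C (q₃.eval (-1)) * q₁ :=
  q3_q1_identity_general h2 m A s w hs hw
end

section
/- Let k be a number field, m, A algebraic integers in k with m² - 4 not a square in k, and suppose m - 2 is a unit in the ring of integers of k. Let r be a root of the octic T(m,A,x) = p(x)·p̄(x) (where p is as in the Murphy construction), and u = (m+s)/2 with s² = m²-4 chosen so p(r) = 0. Then r, r+1, and r+u are units in the ring of integers of k(r, s), and the differences of any two of them are units (i.e., they form an exceptional sequence of three units). -/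
/-!
Since `u² - m u + 1 = 0`, `u` is an algebraic integer with inverse `m - u`; hence Murphy's quartic
`p` is monic with algebraic-integer coefficients and `r` is an algebraic integer. For any
polynomial, `a - b ∣ p(a) - p(b)`; as `p(r) = 0`, the elements `r`, `r + 1`, `r + u` are units
as soon as `p(0) = u²`, `p(-1) = m - 2` and `p(-u) = u²(m - 2)` are.
Their differences are `1`, `u` and `u - 1`, where `(u - 1)² = (m - 2)u`.
-/

open NumberField Polynomial

theorem Polynomial.isUnit_sub_of_isRoot_of_isUnit_eval {R : Type*} [CommRing R] {p : R[X]}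
    {a b : R} (ha : p.IsRoot a) (hb : IsUnit (p.eval b)) : IsUnit (a - b) :=
  isUnit_of_dvd_unit (by simpa [ha.eq_zero] using sub_dvd_eval_sub a b p) hb.neg

theorem mem_integralClosure_of_monic_of_aeval_eq_zero {R L : Type*} [CommRing R] [CommRing L]
    [Algebra R L] {p : (integralClosure R L)[X]} (hp : p.Monic) {x : L} (hx : aeval x p = 0) :
    x ∈ integralClosure R L :=
  isIntegral_trans (A := integralClosure R L) x ⟨p, hp, hx⟩

theorem mul_sub_eq_one_of_sq_eq_sq_sub_four {L : Type*} [Field L] [NeZero (2 : L)] {M s u : L}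
    (hs : s ^ 2 = M ^ 2 - 4) (hu : u = (M + s) / 2) : u * (M - u) = 1 := by
  subst hu
  field_simp
  linear_combination -hs

theorem isUnit_sub_one_of_mul_eq_one {R : Type*} [CommRing R] {u w : R} (huw : u * w = 1)
    (h : IsUnit (u + w - 2)) : IsUnit (u - 1) := by
  have hsq : (u - 1) ^ 2 = u * (u + w - 2) := by linear_combination -huw
  exact (isUnit_pow_iff two_ne_zero).mp (hsq ▸ (IsUnit.of_mul_eq_one w huw).mul h)

def IsExceptionalTriple {R : Type*} [Ring R] (a b c : R) : Prop :=
  IsUnit a ∧ IsUnit b ∧ IsUnit c ∧ IsUnit (b - a) ∧ IsUnit (c - a) ∧ IsUnit (c - b)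

namespace Murphy

variable {R : Type*} [CommRing R]

/-- Murphy's quartic `p`, with `w` standing for `u⁻¹`. -/
noncomputable def quartic (A u w : R) : R[X] :=
  X ^ 4 + C (u - w - A) * X ^ 3 + C ((2 - A) * u - A - 4) * X ^ 2 + C (u ^ 2 - 1 - A * u) * X
    + C (u ^ 2)

theorem quartic_monic (A u w : R) : (quartic A u w).Monic := by
  unfold quartic; monicity!

theorem map_quartic {S : Type*} [CommRing S] (f : R →+* S) (A u w : R) :
    (quartic A u w).map f = quartic (f A) (f u) (f w) := by
  simp [quartic, map_ofNat]

theorem eval_quartic (A u w x : R) : (quartic A u w).eval x =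
    x ^ 4 + (u - w - A) * x ^ 3 + ((2 - A) * u - A - 4) * x ^ 2 + (u ^ 2 - 1 - A * u) * x
      + u ^ 2 := by
  simp [quartic]

theorem eval_zero_quartic (A u w : R) : (quartic A u w).eval 0 = u ^ 2 := by
  simp [eval_quartic]

theorem eval_neg_one_quartic (A u w : R) : (quartic A u w).eval (-1) = u + w - 2 := by
  rw [eval_quartic]; ring

theorem eval_neg_quartic {A u w : R} (huw : u * w = 1) :
    (quartic A u w).eval (-u) = u ^ 2 * (u + w - 2) := by
  rw [eval_quartic]; linear_combination (u ^ 2 - u) * huw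

theorem isExceptionalTriple_of_isRoot {A u w r : R} (huw : u * w = 1)
    (h2 : IsUnit (u + w - 2)) (hr : (quartic A u w).IsRoot r) :
    IsExceptionalTriple r (r + 1) (r + u) := by
  have hu : IsUnit u := IsUnit.of_mul_eq_one w huw
  refine ⟨?_, ?_, ?_, ?_, ?_, ?_⟩
  · simpa using isUnit_sub_of_isRoot_of_isUnit_eval (b := 0) hr
      (by rw [eval_zero_quartic]; exact hu.pow 2)
  · simpa using isUnit_sub_of_isRoot_of_isUnit_eval (b := -1) hr (by rwa [eval_neg_one_quartic])
  · simpa using isUnit_sub_of_isRoot_of_isUnit_eval (b := -u) hr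
      (by rw [eval_neg_quartic huw]; exact (hu.pow 2).mul h2)
  · simp
  · simpa using hu
  · simpa [add_sub_add_left_eq_sub] using isUnit_sub_one_of_mul_eq_one huw h2

end Murphy

noncomputable def NumberField.RingOfIntegers.toIntegralClosure (k L : Type*) [Field k] [CommRing L]
    [Algebra k L] : 𝓞 k →+* integralClosure ℤ L :=
  ((algebraMap k L).comp (algebraMap (𝓞 k) k)).codRestrict _
    fun x ↦ (RingOfIntegers.isIntegral_coe x).map (algebraMap k L).toIntAlgHom

@[simp]
theorem NumberField.RingOfIntegers.coe_toIntegralClosure {k L : Type*} [Field k] [CommRing L]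
    [Algebra k L] (x : 𝓞 k) :
    (toIntegralClosure k L x : L) = algebraMap k L x :=
  rfl

theorem exceptional_sequence_of_murphy_octic_general {k L : Type*} [Field k] [NumberField k]
    [Field L] [Algebra k L] (m A : 𝓞 k)
    (hunit : IsUnit (m - 2))
    (s u r : L)
    (hs : s ^ 2 = algebraMap k L ((algebraMap (𝓞 k) k m) ^ 2 - 4))
    (hu : u = (algebraMap k L (algebraMap (𝓞 k) k m) + s) / 2)
    (hp : r ^ 4 + (u - u⁻¹ - algebraMap k L (algebraMap (𝓞 k) k A)) * r ^ 3
        + ((2 - algebraMap k L (algebraMap (𝓞 k) k A)) * u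
            - algebraMap k L (algebraMap (𝓞 k) k A) - 4) * r ^ 2
        + (u ^ 2 - 1 - algebraMap k L (algebraMap (𝓞 k) k A) * u) * r + u ^ 2 = 0) :
    ∃ a b c : integralClosure ℤ L,
      (a : L) = r ∧ (b : L) = r + 1 ∧ (c : L) = r + u ∧
      IsUnit a ∧ IsUnit b ∧ IsUnit c ∧
      IsUnit (b - a) ∧ IsUnit (c - a) ∧ IsUnit (c - b) := by
  have : CharZero L := charZero_of_injective_algebraMap (algebraMap k L).injective
  set ι := RingOfIntegers.toIntegralClosure k L
  have huw : u * ((ι m : L) - u) = 1 :=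
    mul_sub_eq_one_of_sq_eq_sq_sub_four (by simpa [ι, map_ofNat] using hs) hu
  have hu_mem : u ∈ integralClosure ℤ L :=
    mem_integralClosure_of_monic_of_aeval_eq_zero (p := X ^ 2 - C (ι m) * X + 1) (by monicity!)
      (by
        simp only [map_add, aeval_sub, map_pow, aeval_X, map_mul, aeval_C,
          Subalgebra.algebraMap_apply, map_one]
        linear_combination -huw)
  set U : integralClosure ℤ L := ⟨u, hu_mem⟩
  have hUW : U * (ι m - U) = 1 := Subtype.ext huw
  have hinv : u⁻¹ = ι m - u := inv_eq_of_mul_eq_one_right huw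
  have hP : aeval r (Murphy.quartic (ι A) U (ι m - U)) = 0 := by
    rw [← eval_map_algebraMap, Murphy.map_quartic, Murphy.eval_quartic, ← hp, hinv]
    simp [ι, U]
  set R : integralClosure ℤ L :=
    ⟨r, mem_integralClosure_of_monic_of_aeval_eq_zero (Murphy.quartic_monic _ _ _) hP⟩
  have hroot : (Murphy.quartic (ι A) U (ι m - U)).IsRoot R :=
    Subtype.val_injective ((aeval_algebraMap_apply L R _).symm.trans hP)
  have h2 : IsUnit (U + (ι m - U) - 2) := by
    simpa [map_ofNat] using hunit.map ι
  exact ⟨R, R + 1, R + U, rfl, rfl, rfl, Murphy.isExceptionalTriple_of_isRoot hUW h2 hroot⟩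

/-- if `k` is a number field, `m, A` algebraic integers with `m² - 4`
not a square in `k` and `m - 2` a unit, and `r` is a root of the quartic factor
`p(x)` (with `u = (m+s)/2`, `s² = m² - 4`) of the octic `T(m,A,x)`, then
`r`, `r+1`, `r+u` form an exceptional sequence of three units: all three are
algebraic-integer units and all their pairwise differences are units. -/
theorem exceptional_sequence_of_murphy_octic {k L : Type*} [Field k] [NumberField k]
    [Field L] [Algebra k L] (m A : 𝓞 k)
    (hm : ∀ x : k, x ^ 2 ≠ (algebraMap (𝓞 k) k m) ^ 2 - 4)
    (hunit : IsUnit (m - 2))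
    (s u r : L)
    (hs : s ^ 2 = algebraMap k L ((algebraMap (𝓞 k) k m) ^ 2 - 4))
    (hu : u = (algebraMap k L (algebraMap (𝓞 k) k m) + s) / 2)
    (hp : r ^ 4 + (u - u⁻¹ - algebraMap k L (algebraMap (𝓞 k) k A)) * r ^ 3
        + ((2 - algebraMap k L (algebraMap (𝓞 k) k A)) * u
            - algebraMap k L (algebraMap (𝓞 k) k A) - 4) * r ^ 2
        + (u ^ 2 - 1 - algebraMap k L (algebraMap (𝓞 k) k A) * u) * r + u ^ 2 = 0) :
    ∃ a b c : integralClosure ℤ L,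
      (a : L) = r ∧ (b : L) = r + 1 ∧ (c : L) = r + u ∧
      IsUnit a ∧ IsUnit b ∧ IsUnit c ∧
      IsUnit (b - a) ∧ IsUnit (c - a) ∧ IsUnit (c - b) :=
  exceptional_sequence_of_murphy_octic_general m A hunit s u r hs hu hp
end
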